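/- For every natural number k and every number of iterations T with k < T, there exist a finite simple graph G and two subgraphs S_1, S_2 of G (given by vertex subsets V_1, V_2) such that the multiset of WL colors returned by WLS^{k+1} after T iterations on S_1 equals that on S_2, while the multiset of WL colors returned by WLS^{k} after T iterations on S_1 differs from that on S_2. In other words, equivalence of WLS^{k+1} colorings of two subgraphs does not imply equivalence of their WLS^{k} colorings. -/

import Mathlib

/-- Hereditarily built nested WL colors: a color after `i` refinement iterations is a
pair of a color after `i - 1` iterations and a multiset of such colors (of the
neighbors); the initial uniform color is the unique element of `Unit`. Equality of
colors is canonical. -/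
def WLColor : ℕ → Type
  | 0 => Unit
  | (i + 1) => WLColor i × Multiset (WLColor i)

/-- 1-WL color refinement with uniform initial coloring: `wlColor G i v` is the color
of vertex `v` after `i` refinement iterations on the finite simple graph `G`; it pairs
the previous color of `v` with the multiset of previous colors of its neighbors. -/
noncomputable def wlColor {W : Type*} [Fintype W] (G : SimpleGraph W) :
    (i : ℕ) → W → WLColor i
  | 0, _ => ()
  | (i + 1), v =>
      (wlColor G i v, ((G.neighborSet v).toFinite.toFinset.val).map (wlColor G i))

/-- The `k`-hop neighborhood of a vertex set `Vs`: all vertices of `G` reachable from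
some vertex of `Vs` within `k` hops. -/
def khop {V : Type*} (G : SimpleGraph V) (Vs : Set V) (k : ℕ) : Set V :=
  {u | ∃ v ∈ Vs, ∃ p : G.Walk v u, p.length ≤ k}

lemma subset_khop {V : Type*} (G : SimpleGraph V) (Vs : Set V) (k : ℕ) :
    Vs ⊆ khop G Vs k :=
  fun v hv => ⟨v, hv, SimpleGraph.Walk.nil, by simp⟩

/-- `WLS G k T Vs`: run `T` iterations of 1-WL on the subgraph of `G` induced by the
`k`-hop neighborhood of the subgraph with vertex set `Vs`, and return the multiset of
final colors of the vertices of `Vs`. -/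
noncomputable def WLS {V : Type*} [Fintype V] (G : SimpleGraph V) (k T : ℕ)
    (Vs : Finset V) : Multiset (WLColor T) :=
  letI : Fintype ↥(khop G (↑Vs) k) := Fintype.ofFinite _
  Vs.attach.val.map fun v =>
    wlColor (G.induce (khop G (↑Vs) k)) T
      ⟨v.1, subset_khop G (↑Vs) k (Finset.mem_coe.mpr v.2)⟩


/-- The "regular of degree 2" color sequence. -/
def wlr : (i : ℕ) → WLColor i
  | 0 => ()
  | (i + 1) => (wlr i, {wlr i, wlr i})

lemma wlColor_succ {W : Type*} [Fintype W] (G : SimpleGraph W) (i : ℕ) (v : W) :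
    wlColor G (i+1) v
      = (wlColor G i v, ((G.neighborSet v).toFinite.toFinset.val).map (wlColor G i)) := rfl

lemma wlr_succ (i : ℕ) : wlr (i+1) = (wlr i, {wlr i, wlr i}) := rfl

lemma reg2_wl {W : Type*} [Fintype W] (G : SimpleGraph W)
    (h : ∀ v, ((G.neighborSet v).toFinite.toFinset.val).card = 2) :
    ∀ i v, wlColor G i v = wlr i := by
  intro i
  induction i with
  | zero => intro v; rfl
  | succ i ih =>
    intro v
    rw [wlColor_succ, wlr_succ]
    refine Prod.ext (ih v) ?_
    show Multiset.map _ _ = _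
    rw [Multiset.map_congr rfl (fun u _ => ih u), Multiset.map_const', h v]
    rfl

lemma ne_wlr_mono {W : Type*} [Fintype W] (G : SimpleGraph W) {i : ℕ} {v : W}
    (h : wlColor G i v ≠ wlr i) : ∀ j, i ≤ j → wlColor G j v ≠ wlr j := by
  intro j hj
  induction j with
  | zero => exact Nat.le_zero.mp hj ▸ h
  | succ j ih =>
    rcases Nat.lt_or_ge i (j+1) with hlt | hge
    · have hij : i ≤ j := by omega
      intro heq
      exact (ih hij) (congrArg Prod.fst heq)
    · have : i = j + 1 := by omega
      exact this ▸ h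

lemma ne_wlr_card {W : Type*} [Fintype W] (G : SimpleGraph W) {v : W}
    (h : ((G.neighborSet v).toFinite.toFinset.val).card ≠ 2) (i : ℕ) :
    wlColor G (i+1) v ≠ wlr (i+1) := by
  intro heq
  have h2 := congrArg Prod.snd heq
  have := congrArg Multiset.card h2
  simp only [wlColor_succ, wlr_succ, Multiset.card_map] at this
  rw [show ({wlr i, wlr i} : Multiset (WLColor i)).card = 2 from rfl] at this
  exact h this

lemma ne_wlr_step {W : Type*} [Fintype W] (G : SimpleGraph W) {v u : W}
    (hadj : G.Adj v u) {i : ℕ} (h : wlColor G i u ≠ wlr i) :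
    wlColor G (i+1) v ≠ wlr (i+1) := by
  intro heq
  have h2 := congrArg Prod.snd heq
  simp only [wlColor_succ, wlr_succ] at h2
  have hmem : wlColor G i u ∈ ((G.neighborSet v).toFinite.toFinset.val).map (wlColor G i) := by
    refine Multiset.mem_map.mpr ⟨u, ?_, rfl⟩
    rw [← Finset.mem_def, Set.Finite.mem_toFinset]
    exact hadj
  rw [h2] at hmem
  rcases Multiset.mem_cons.mp hmem with h' | h'
  · exact h h'
  · exact h (Multiset.mem_singleton.mp h')

section Construction

open Sum

variable (k : ℕ)

/-- Vertex type: a triangle (`ZMod 3`) and a cycle of length `2k+4` (`ZMod (2k+4)`). -/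
abbrev Vt (k : ℕ) : Type := ZMod 3 ⊕ ZMod (2*k+4)

instance : NeZero (2*k+4) := ⟨by omega⟩

def cycRel (k : ℕ) : Vt k → Vt k → Prop := fun u v =>
  match u, v with
  | .inl a, .inl b => a - b = 1
  | .inr a, .inr b => a - b = 1
  | _, _ => False

/-- The graph: disjoint union of a triangle and a cycle of length `2k+4`. -/
def Gk (k : ℕ) : SimpleGraph (Vt k) := SimpleGraph.fromRel (cycRel k)

lemma two_ne_zero_zmod : (2 : ZMod (2*k+4)) ≠ 0 := by
  have : ((2:ℤ) : ZMod (2*k+4)) = 2 := by push_cast; ring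
  rw [← this, Ne, ZMod.intCast_zmod_eq_zero_iff_dvd]
  intro h
  have := Int.le_of_dvd (by norm_num) h
  omega

lemma one_ne_zero_zmod : (1 : ZMod (2*k+4)) ≠ 0 := by
  have : ((1:ℤ) : ZMod (2*k+4)) = 1 := by push_cast; ring
  rw [← this, Ne, ZMod.intCast_zmod_eq_zero_iff_dvd]
  intro h
  have := Int.le_of_dvd (by norm_num) h
  omega

lemma adj_inr_iff (a : ZMod (2*k+4)) (w : Vt k) :
    (Gk k).Adj (inr a) w ↔ (w = inr (a+1) ∨ w = inr (a-1)) := by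
  constructor
  · rintro ⟨hne, h | h⟩
    · cases w with
      | inl b => exact absurd h (by simp [cycRel])
      | inr b =>
        have hb : a - b = 1 := h
        exact Or.inr (by rw [show b = a - 1 by linear_combination -hb])
    · cases w with
      | inl b => exact absurd h (by simp [cycRel])
      | inr b =>
        have hb : b - a = 1 := h
        exact Or.inl (by rw [show b = a + 1 by linear_combination hb])
  · rintro (rfl | rfl)
    · refine ⟨fun h => one_ne_zero_zmod k ?_, Or.inr (show a + 1 - a = 1 by ring)⟩
      have h' := Sum.inr.inj h
      linear_combination -h'
    · refine ⟨fun h => one_ne_zero_zmod k ?_, Or.inl (show a - (a-1) = 1 by ring)⟩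
      have h' := Sum.inr.inj h
      linear_combination h'

lemma adj_inl_iff (a : ZMod 3) (w : Vt k) :
    (Gk k).Adj (inl a) w ↔ (w = inl (a+1) ∨ w = inl (a-1)) := by
  have h13 : (1 : ZMod 3) ≠ 0 := by decide
  constructor
  · rintro ⟨hne, h | h⟩
    · cases w with
      | inr b => exact absurd h (by simp [cycRel])
      | inl b =>
        have hb : a - b = 1 := h
        exact Or.inr (by rw [show b = a - 1 by linear_combination -hb])
    · cases w with
      | inr b => exact absurd h (by simp [cycRel])
      | inl b =>
        have hb : b - a = 1 := h
        exact Or.inl (by rw [show b = a + 1 by linear_combination hb])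
  · rintro (rfl | rfl)
    · refine ⟨fun h => h13 ?_, Or.inr (show a + 1 - a = 1 by ring)⟩
      have h' := Sum.inl.inj h
      linear_combination -h'
    · refine ⟨fun h => h13 ?_, Or.inl (show a - (a-1) = 1 by ring)⟩
      have h' := Sum.inl.inj h
      linear_combination h'


lemma walk_stays_inl : ∀ {u w : Vt k} (_ : (Gk k).Walk u w) (a : ZMod 3),
    u = inl a → ∃ b, w = inl b := by
  intro u w p
  induction p with
  | nil => exact fun a h => ⟨a, h⟩
  | cons h q ih =>
    rintro a rfl
    rcases (adj_inl_iff k a _).mp h with h' | h'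
    · exact ih _ h'
    · exact ih _ h'

lemma walk_stays_inr : ∀ {u w : Vt k} (p : (Gk k).Walk u w) (a : ZMod (2*k+4)),
    u = inr a → ∃ m : ℤ, m.natAbs ≤ p.length ∧ w = inr (a + (m : ZMod (2*k+4))) := by
  intro u w p
  induction p with
  | nil =>
    intro a h
    exact ⟨0, by simp, by simpa using h⟩
  | @cons u v w h q ih =>
    rintro a rfl
    rcases (adj_inr_iff k a v).mp h with h' | h'
    · obtain ⟨m, hm, hw⟩ := ih (a+1) h'
      refine ⟨m + 1, ?_, ?_⟩
      · simp only [SimpleGraph.Walk.length_cons]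
        have := Int.natAbs_add_le m 1
        simp at this; omega
      · rw [hw]; push_cast; ring_nf
    · obtain ⟨m, hm, hw⟩ := ih (a-1) h'
      refine ⟨m - 1, ?_, ?_⟩
      · simp only [SimpleGraph.Walk.length_cons]
        have := Int.natAbs_sub_le m 1
        simp at this; omega
      · rw [hw]; push_cast; ring_nf

lemma walk_add (m : ℕ) (a : ZMod (2*k+4)) :
    ∃ p : (Gk k).Walk (inr a) (inr (a + (m : ZMod (2*k+4)))), p.length = m := by
  induction m generalizing a with
  | zero => exact ⟨(SimpleGraph.Walk.nil : (Gk k).Walk (inr a) (inr a)).copy rfl (by simp), by simp⟩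
  | succ m ih =>
    obtain ⟨q, hq⟩ := ih (a + 1)
    have hadj : (Gk k).Adj (inr a) (inr (a+1)) := (adj_inr_iff k a _).mpr (Or.inl rfl)
    refine ⟨(SimpleGraph.Walk.cons hadj q).copy rfl (by push_cast; ring_nf), by simp [hq]⟩

lemma walk_sub (m : ℕ) (a : ZMod (2*k+4)) :
    ∃ p : (Gk k).Walk (inr a) (inr (a - (m : ZMod (2*k+4)))), p.length = m := by
  obtain ⟨q, hq⟩ := walk_add k m (a - m)
  exact ⟨(q.copy rfl (by rw [sub_add_cancel])).reverse, by simp [hq]⟩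


def V1 (k : ℕ) : Finset (Vt k) := Finset.univ.image inl
def V2 (k : ℕ) : Finset (Vt k) := {inr 0, inr 1, inr 2}

lemma mem_V1 (u : Vt k) : u ∈ V1 k ↔ ∃ a, u = inl a := by
  simp [V1, eq_comm]

lemma mem_V2 (u : Vt k) : u ∈ V2 k ↔ u = inr 0 ∨ u = inr 1 ∨ u = inr 2 := by
  simp [V2]

lemma mem_khop_V1 (j : ℕ) (u : Vt k) :
    u ∈ khop (Gk k) (↑(V1 k)) j ↔ ∃ a, u = inl a := by
  constructor
  · rintro ⟨v, hv, p, -⟩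
    obtain ⟨a, rfl⟩ := (mem_V1 k v).mp hv
    exact walk_stays_inl k p a rfl
  · rintro ⟨a, rfl⟩
    exact subset_khop _ _ _ ((mem_V1 k _).mpr ⟨a, rfl⟩)

lemma cast_toNat (x : ℤ) (hx : 0 ≤ x) :
    ((x.toNat : ℕ) : ZMod (2*k+4)) = ((x : ℤ) : ZMod (2*k+4)) := by
  rw [← Int.cast_natCast, Int.toNat_of_nonneg hx]

lemma mem_khop_V2_k (u : Vt k) :
    u ∈ khop (Gk k) (↑(V2 k)) k ↔
      ∃ x : ℤ, -(k:ℤ) ≤ x ∧ x ≤ (k:ℤ)+2 ∧ u = inr ((x : ZMod (2*k+4))) := by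
  constructor
  · rintro ⟨v, hv, p, hlen⟩
    have : ∃ y : ℤ, 0 ≤ y ∧ y ≤ 2 ∧ v = inr ((y : ZMod (2*k+4))) := by
      rcases (mem_V2 k v).mp hv with rfl | rfl | rfl
      · exact ⟨0, by norm_num, by norm_num, by norm_num⟩
      · exact ⟨1, by norm_num, by norm_num, by norm_num⟩
      · exact ⟨2, by norm_num, by norm_num, by norm_num⟩
    obtain ⟨y, hy0, hy2, rfl⟩ := this
    obtain ⟨m, hm, rfl⟩ := walk_stays_inr k p _ rfl
    refine ⟨y + m, by omega, by omega, by push_cast; ring_nf⟩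
  · rintro ⟨x, hx1, hx2, rfl⟩
    rcases le_or_gt x 0 with hx0 | hx0
    · obtain ⟨p, hp⟩ := walk_sub k (-x).toNat 0
      refine ⟨inr 0, (mem_V2 k _).mpr (Or.inl rfl), p.copy rfl ?_,
        by rw [SimpleGraph.Walk.length_copy, hp]; omega⟩
      rw [cast_toNat k _ (by omega)]
      push_cast
      ring_nf
    · rcases le_or_gt 2 x with hx3 | hx3
      · obtain ⟨p, hp⟩ := walk_add k (x-2).toNat 2
        refine ⟨inr 2, (mem_V2 k _).mpr (Or.inr (Or.inr rfl)), p.copy rfl ?_,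
          by rw [SimpleGraph.Walk.length_copy, hp]; omega⟩
        rw [cast_toNat k _ (by omega)]
        push_cast
        ring_nf
      · have : x = 1 := by omega
        subst this
        refine subset_khop _ _ _ ((mem_V2 k _).mpr (Or.inr (Or.inl ?_)))
        push_cast
        ring_nf

lemma mem_khop_V2_k1 (u : Vt k) :
    u ∈ khop (Gk k) (↑(V2 k)) (k+1) ↔ ∃ b, u = inr b := by
  constructor
  · rintro ⟨v, hv, p, -⟩
    have : ∃ a, v = inr a := by
      rcases (mem_V2 k v).mp hv with rfl | rfl | rfl
      exacts [⟨_, rfl⟩, ⟨_, rfl⟩, ⟨_, rfl⟩]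
    obtain ⟨a, rfl⟩ := this
    obtain ⟨m, -, rfl⟩ := walk_stays_inr k p a rfl
    exact ⟨_, rfl⟩
  · rintro ⟨b, rfl⟩
    have hval : ((b.val : ℕ) : ZMod (2*k+4)) = b := ZMod.natCast_zmod_val b
    have hlt : b.val < 2*k+4 := ZMod.val_lt b
    rcases le_or_gt b.val 2 with h2 | h2
    · refine subset_khop _ _ _ ((mem_V2 k _).mpr ?_)
      rw [← hval]
      interval_cases h : b.val
      · exact Or.inl (by simp)
      · exact Or.inr (Or.inl (by simp))
      · exact Or.inr (Or.inr (by simp))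
    · rcases le_or_gt b.val (k+3) with h3 | h3
      · obtain ⟨p, hp⟩ := walk_add k (b.val - 2) 2
        refine ⟨inr 2, (mem_V2 k _).mpr (Or.inr (Or.inr rfl)), p.copy rfl ?_,
          by rw [SimpleGraph.Walk.length_copy, hp]; omega⟩
        rw [show ((b.val - 2 : ℕ) : ZMod (2*k+4)) = (b.val : ZMod (2*k+4)) - 2 by
          rw [Nat.cast_sub (by omega)]; norm_num, hval]
        ring_nf
      · obtain ⟨p, hp⟩ := walk_sub k (2*k+4 - b.val) 0
        refine ⟨inr 0, (mem_V2 k _).mpr (Or.inl rfl), p.copy rfl ?_,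
          by rw [SimpleGraph.Walk.length_copy, hp]; omega⟩
        rw [show ((2*k+4 - b.val : ℕ) : ZMod (2*k+4)) = (0 : ZMod (2*k+4)) - (b.val : ZMod (2*k+4)) by
          rw [Nat.cast_sub (by omega)]; simp [ZMod.natCast_self], hval]
        ring_nf


lemma pair_card {α : Type*} [Fintype α] {s : Set α} {x y : α} (hs : s = {x, y})
    (hxy : x ≠ y) : (s.toFinite.toFinset.val).card = 2 := by
  classical
  subst hs
  have : (Set.toFinite ({x, y} : Set α)).toFinset = ({x, y} : Finset α) := by
    apply Finset.ext
    intro u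
    simp only [Set.Finite.mem_toFinset, Finset.mem_insert, Finset.mem_singleton,
      Set.mem_insert_iff, Set.mem_singleton_iff]
  rw [show (Set.toFinite ({x, y} : Set α)).toFinset.val.card
      = (Set.toFinite ({x, y} : Set α)).toFinset.card from rfl, this, Finset.card_pair hxy]

lemma single_card {α : Type*} [Fintype α] {s : Set α} {x : α} (hs : s = {x}) :
    (s.toFinite.toFinset.val).card = 1 := by
  classical
  subst hs
  have : (Set.toFinite ({x} : Set α)).toFinset = ({x} : Finset α) := by
    apply Finset.ext
    intro u
    simp only [Set.Finite.mem_toFinset, Finset.mem_singleton, Set.mem_singleton_iff]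
  rw [show (Set.toFinite ({x} : Set α)).toFinset.val.card
      = (Set.toFinite ({x} : Set α)).toFinset.card from rfl, this, Finset.card_singleton]

lemma reg_V1 (j : ℕ) [Fintype ↥(khop (Gk k) (↑(V1 k)) j)]
    (v : ↥(khop (Gk k) (↑(V1 k)) j)) :
    ((((Gk k).induce (khop (Gk k) (↑(V1 k)) j)).neighborSet v).toFinite.toFinset.val).card
      = 2 := by
  obtain ⟨a, ha⟩ := (mem_khop_V1 k j v.1).mp v.2
  refine pair_card (x := ⟨inl (a+1), (mem_khop_V1 k j _).mpr ⟨_, rfl⟩⟩)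
    (y := ⟨inl (a-1), (mem_khop_V1 k j _).mpr ⟨_, rfl⟩⟩) ?_ ?_
  · ext u
    show ((Gk k).induce _).Adj v u ↔ _
    rw [SimpleGraph.comap_adj]
    show (Gk k).Adj v.1 u.1 ↔ _
    rw [ha, adj_inl_iff]
    constructor
    · rintro (h | h)
      · exact Or.inl (Subtype.ext h)
      · exact Or.inr (Subtype.ext h)
    · rintro (rfl | rfl)
      · exact Or.inl rfl
      · exact Or.inr rfl
  · intro h
    have h' := Sum.inl.inj (congrArg Subtype.val h)
    have : (1 : ZMod 3) = 0 := by
      have h2 : (2 : ZMod 3) = 0 := by linear_combination h'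
      calc (1 : ZMod 3) = 2 + 2 := by decide
      _ = 0 := by rw [h2]; ring
    exact absurd this (by decide)

lemma reg_V2 [Fintype ↥(khop (Gk k) (↑(V2 k)) (k+1))]
    (v : ↥(khop (Gk k) (↑(V2 k)) (k+1))) :
    ((((Gk k).induce (khop (Gk k) (↑(V2 k)) (k+1))).neighborSet v).toFinite.toFinset.val).card
      = 2 := by
  obtain ⟨a, ha⟩ := (mem_khop_V2_k1 k v.1).mp v.2
  refine pair_card (x := ⟨inr (a+1), (mem_khop_V2_k1 k _).mpr ⟨_, rfl⟩⟩)
    (y := ⟨inr (a-1), (mem_khop_V2_k1 k _).mpr ⟨_, rfl⟩⟩) ?_ ?_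
  · ext u
    show ((Gk k).induce _).Adj v u ↔ _
    rw [SimpleGraph.comap_adj]
    show (Gk k).Adj v.1 u.1 ↔ _
    rw [ha, adj_inr_iff]
    constructor
    · rintro (h | h)
      · exact Or.inl (Subtype.ext h)
      · exact Or.inr (Subtype.ext h)
    · rintro (rfl | rfl)
      · exact Or.inl rfl
      · exact Or.inr rfl
  · intro h
    have h' := Sum.inr.inj (congrArg Subtype.val h)
    exact two_ne_zero_zmod k (by linear_combination h')

lemma WLS_eq_replicate {V : Type*} [Fintype V] (G : SimpleGraph V) (k T : ℕ) (Vs : Finset V)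
    (h : ∀ (_ : Fintype ↥(khop G (↑Vs) k)) (v : ↥(khop G (↑Vs) k)),
      wlColor (G.induce (khop G (↑Vs) k)) T v = wlr T) :
    WLS G k T Vs = Multiset.replicate Vs.card (wlr T) := by
  rw [WLS]
  rw [Multiset.map_congr rfl (fun v _ => h _ _), Multiset.map_const']
  congr 1
  rw [show Vs.attach.val.card = Vs.attach.card from rfl, Finset.card_attach]

lemma card_V1 : (V1 k).card = 3 := by
  rw [V1, Finset.card_image_of_injective _ Sum.inl_injective]
  simp

lemma card_V2 : (V2 k).card = 3 := by
  have h01 : (0 : ZMod (2*k+4)) ≠ 1 := fun h => one_ne_zero_zmod k h.symm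
  have h02 : (0 : ZMod (2*k+4)) ≠ 2 := fun h => two_ne_zero_zmod k h.symm
  have h12 : (1 : ZMod (2*k+4)) ≠ 2 := by
    intro h
    exact one_ne_zero_zmod k (by linear_combination -h)
  rw [V2]
  rw [Finset.card_insert_of_notMem (by simp [h01, h02]),
    Finset.card_insert_of_notMem (by simp [h12])]
  rfl


lemma memS (x : ℤ) (h1 : -(k:ℤ) ≤ x) (h2 : x ≤ (k:ℤ)+2) :
    inr ((x : ZMod (2*k+4))) ∈ khop (Gk k) (↑(V2 k)) k :=
  (mem_khop_V2_k k _).mpr ⟨x, h1, h2, rfl⟩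

lemma not_in_S (u : Vt k) (hu : u ∈ khop (Gk k) (↑(V2 k)) k) :
    u ≠ inr ((((k:ℤ)+3) : ℤ) : ZMod (2*k+4)) := by
  obtain ⟨x, h1, h2, rfl⟩ := (mem_khop_V2_k k u).mp hu
  intro h
  have h' := Sum.inr.inj h
  have : ((x - ((k:ℤ)+3) : ℤ) : ZMod (2*k+4)) = 0 := by
    push_cast at h' ⊢
    linear_combination h'
  rw [ZMod.intCast_zmod_eq_zero_iff_dvd] at this
  have := Int.eq_zero_of_abs_lt_dvd this (by push_cast; rw [abs_lt]; omega)
  omega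

section Bad

variable [inst : Fintype ↥(khop (Gk k) (↑(V2 k)) k)]

/-- The vertex of the induced graph on the `k`-hop ball of `V2` at position `x`. -/
def vert (x : ℤ) (h1 : -(k:ℤ) ≤ x) (h2 : x ≤ (k:ℤ)+2) :
    ↥(khop (Gk k) (↑(V2 k)) k) :=
  ⟨inr ((x : ZMod (2*k+4))), memS k x h1 h2⟩

lemma vert_eq {x x' : ℤ} (h : x = x') (h1 h2 h1' h2') :
    vert k x h1 h2 = vert k x' h1' h2' := by
  subst h; rfl

lemma endpoint_ne (i : ℕ) :
    wlColor ((Gk k).induce (khop (Gk k) (↑(V2 k)) k)) (i+1)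
      (vert k ((k:ℤ)+2) (by omega) (by omega)) ≠ wlr (i+1) := by
  apply ne_wlr_card
  rw [single_card (x := vert k ((k:ℤ)+1) (by omega) (by omega))]
  · omega
  ext u
  show ((Gk k).induce _).Adj _ u ↔ _
  rw [SimpleGraph.comap_adj]
  show (Gk k).Adj (inr _) u.1 ↔ _
  rw [adj_inr_iff]
  constructor
  · rintro (h | h)
    · exfalso
      apply not_in_S k u.1 u.2
      rw [h]
      congr 1
      push_cast
      ring
    · apply Subtype.ext
      show u.1 = inr _
      rw [h]
      congr 1
      push_cast
      ring
  · rintro rfl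
    right
    show inr _ = inr _
    congr 1
    push_cast
    ring

lemma chain : ∀ j : ℕ, j ≤ k →
    ∀ (h1 : -(k:ℤ) ≤ (k:ℤ)+2-(j:ℤ)) (h2 : (k:ℤ)+2-(j:ℤ) ≤ (k:ℤ)+2),
    wlColor ((Gk k).induce (khop (Gk k) (↑(V2 k)) k)) (j+1)
      (vert k ((k:ℤ)+2-(j:ℤ)) h1 h2) ≠ wlr (j+1) := by
  intro j
  induction j with
  | zero =>
    intro _ h1 h2
    rw [vert_eq k (show (k:ℤ)+2-((0:ℕ):ℤ) = (k:ℤ)+2 by push_cast; ring) h1 h2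
      (by omega) (by omega)]
    exact endpoint_ne k 0
  | succ j ih =>
    intro hj h1 h2
    have hadj : ((Gk k).induce (khop (Gk k) (↑(V2 k)) k)).Adj
        (vert k ((k:ℤ)+2-((j:ℕ)+1:ℤ)) (by push_cast at h1 ⊢; omega) (by push_cast at h2 ⊢; omega))
        (vert k ((k:ℤ)+2-(j:ℤ)) (by omega) (by omega)) := by
      apply SimpleGraph.comap_adj.mpr
      show (Gk k).Adj (inr _) (inr _)
      rw [adj_inr_iff]
      left
      congr 1
      push_cast
      ring
    have step := ne_wlr_step _ hadj (ih (by omega) (by omega) (by omega))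
    rw [vert_eq k (show (k:ℤ)+2-((j:ℕ)+1:ℤ) = (k:ℤ)+2-(((j+1):ℕ):ℤ) by push_cast; ring)
      _ _ h1 h2] at step
    exact step

lemma bad_color (T : ℕ) (hT : k+1 ≤ T) (hm : inr (2 : ZMod (2*k+4)) ∈ khop (Gk k) (↑(V2 k)) k) :
    wlColor ((Gk k).induce (khop (Gk k) (↑(V2 k)) k)) T ⟨inr 2, hm⟩ ≠ wlr T := by
  have h := chain k k le_rfl (by omega) (by omega)
  have hv : vert k ((k:ℤ)+2-(k:ℤ)) (by omega) (by omega) = ⟨inr 2, hm⟩ := by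
    apply Subtype.ext
    show inr _ = inr _
    congr 1
    rw [show (k:ℤ)+2-(k:ℤ) = 2 by ring]
    push_cast
    ring
  rw [hv] at h
  exact ne_wlr_mono _ h T (by omega)

end Bad

end Construction


open Sum in
/-- Equivalence of `WLS^{k+1}` colorings of two subgraphs does not imply equivalence of
their `WLS^k` colorings: for every `k < T` there exist a finite simple graph and two
subgraphs whose color multisets agree under `WLS^{k+1}` but differ under `WLS^k`. -/
theorem wls_succ_eq_not_imp_eq : ∀ k T : ℕ, k < T →
    ∃ (V : Type) (fV : Fintype V) (G : SimpleGraph V) (V1 V2 : Finset V),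
      @WLS V fV G (k + 1) T V1 = @WLS V fV G (k + 1) T V2 ∧
      @WLS V fV G k T V1 ≠ @WLS V fV G k T V2 := by
  intro k T hkT
  refine ⟨Vt k, inferInstance, Gk k, V1 k, V2 k, ?_, ?_⟩
  · have e1 : WLS (Gk k) (k+1) T (V1 k) = Multiset.replicate 3 (wlr T) :=
      (WLS_eq_replicate (Gk k) (k+1) T (V1 k) (fun inst v => by
        letI := inst
        exact reg2_wl _ (fun v => reg_V1 k (k+1) v) T v)).trans (by rw [card_V1])
    have e2 : WLS (Gk k) (k+1) T (V2 k) = Multiset.replicate 3 (wlr T) :=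
      (WLS_eq_replicate (Gk k) (k+1) T (V2 k) (fun inst v => by
        letI := inst
        exact reg2_wl _ (fun v => reg_V2 k v) T v)).trans (by rw [card_V2])
    exact e1.trans e2.symm
  · intro h
    have e3 : WLS (Gk k) k T (V1 k) = Multiset.replicate 3 (wlr T) :=
      (WLS_eq_replicate (Gk k) k T (V1 k) (fun inst v => by
        letI := inst
        exact reg2_wl _ (fun v => reg_V1 k k v) T v)).trans (by rw [card_V1])
    have h2 : WLS (Gk k) k T (V2 k) = Multiset.replicate 3 (wlr T) := h.symm.trans e3
    have hm2 : inr (2 : ZMod (2*k+4)) ∈ V2 k := (mem_V2 k _).mpr (Or.inr (Or.inr rfl))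
    letI : Fintype ↥(khop (Gk k) (↑(V2 k)) k) := Fintype.ofFinite _
    have hmem : wlColor ((Gk k).induce (khop (Gk k) (↑(V2 k)) k)) T
        ⟨inr 2, subset_khop (Gk k) (↑(V2 k)) k (Finset.mem_coe.mpr hm2)⟩
          ∈ WLS (Gk k) k T (V2 k) := by
      rw [WLS]
      exact Multiset.mem_map.mpr ⟨⟨inr 2, hm2⟩, Finset.mem_attach (V2 k) ⟨inr 2, hm2⟩, rfl⟩
    rw [h2] at hmem
    exact bad_color k T (by omega) _ (Multiset.eq_of_mem_replicate hmem)
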